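/- The inverse translation is deterministic: if t ⇐ A ⊣ Θ ⇝ M and t ⇐ A ⊣ Θ ⇝ M' are both derivable then M = M', and if t ⇒ A ⊣ Θ ⇝ M and t ⇒ A' ⊣ Θ ⇝ M' are both derivable then A = A' and M = M' (assuming Θ assigns at most one type to each constant/variable and Δ assigns at most one type to each meta-variable). -/

import Mathlib

/- De Bruijn presentation of LF: kinds, types, objects (with meta-variables). -/
mutual
inductive LTy : Type where
  | const : Nat → LTy
  | pi : LTy → LTy → LTy
  | app : LTy → LObj → LTy
inductive LObj : Type where
  | const : Nat → LObj
  | var : Nat → LObj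
  | mvar : Nat → LObj
  | app : LObj → LObj → LObj
  | lam : LTy → LObj → LObj
end

inductive LKind : Type where
  | type : LKind
  | pi : LTy → LKind → LKind

mutual
def liftTy (d : Nat) : LTy → LTy
  | .const a => .const a
  | .pi A B => .pi (liftTy d A) (liftTy (d+1) B)
  | .app A M => .app (liftTy d A) (liftObj d M)
def liftObj (d : Nat) : LObj → LObj
  | .const c => .const c
  | .var k => if k < d then .var k else .var (k+1)
  | .mvar X => .mvar X
  | .app M N => .app (liftObj d M) (liftObj d N)
  | .lam A M => .lam (liftTy d A) (liftObj (d+1) M)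
end

def liftKind (d : Nat) : LKind → LKind
  | .type => .type
  | .pi A K => .pi (liftTy d A) (liftKind (d+1) K)

/- Capture-avoiding substitution of an object for de Bruijn variable d. -/
mutual
def substTy (d : Nat) (s : LObj) : LTy → LTy
  | .const a => .const a
  | .pi A B => .pi (substTy d s A) (substTy (d+1) (liftObj 0 s) B)
  | .app A M => .app (substTy d s A) (substObj d s M)
def substObj (d : Nat) (s : LObj) : LObj → LObj
  | .const c => .const c
  | .var k => if k = d then s else if d < k then .var (k-1) else .var k
  | .mvar X => .mvar X
  | .app M N => .app (substObj d s M) (substObj d s N)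
  | .lam A M => .lam (substTy d s A) (substObj (d+1) (liftObj 0 s) M)
end

def substKind (d : Nat) (s : LObj) : LKind → LKind
  | .type => .type
  | .pi A K => .pi (substTy d s A) (substKind (d+1) (liftObj 0 s) K)

/- Context lookup with the appropriate lifting. -/
inductive Lk : List LTy → Nat → LTy → Prop where
  | zero : Lk (A :: Γ) 0 (liftTy 0 A)
  | succ : Lk Γ k A → Lk (B :: Γ) (k+1) (liftTy 0 A)

/- LF typing judgments, relative to a signature (ts for kinds of type constants,
   os for types of object constants) and a meta-variable context Δ. -/
mutual
inductive WfKind (ts : Nat → LKind) (os : Nat → LTy) (Δ : Nat → LTy) :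
    List LTy → LKind → Prop where
  | type : WfKind ts os Δ Γ .type
  | pi : HasKind ts os Δ Γ A .type → WfKind ts os Δ (A :: Γ) K →
      WfKind ts os Δ Γ (.pi A K)
inductive HasKind (ts : Nat → LKind) (os : Nat → LTy) (Δ : Nat → LTy) :
    List LTy → LTy → LKind → Prop where
  | const : HasKind ts os Δ Γ (.const a) (ts a)
  | pi : HasKind ts os Δ Γ A .type → HasKind ts os Δ (A :: Γ) B .type →
      HasKind ts os Δ Γ (.pi A B) .type
  | app : HasKind ts os Δ Γ A (.pi B K) → HasTy ts os Δ Γ M B →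
      HasKind ts os Δ Γ (.app A M) (substKind 0 M K)
inductive HasTy (ts : Nat → LKind) (os : Nat → LTy) (Δ : Nat → LTy) :
    List LTy → LObj → LTy → Prop where
  | const : HasTy ts os Δ Γ (.const c) (os c)
  | var : Lk Γ k A → HasTy ts os Δ Γ (.var k) A
  | mvar : HasTy ts os Δ Γ (.mvar X) (Δ X)
  | lam : HasKind ts os Δ Γ A .type → HasTy ts os Δ (A :: Γ) M B →
      HasTy ts os Δ Γ (.lam A M) (.pi A B)
  | app : HasTy ts os Δ Γ M (.pi A B) → HasTy ts os Δ Γ N A →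
      HasTy ts os Δ Γ (.app M N) (substTy 0 N B)
end
/- Simple types with the two atomic types lf-obj and lf-type. -/
inductive STy : Type where
  | lfObj : STy
  | lfType : STy
  | arr : STy → STy → STy

/- The flattening map φ on LF types (base types go to lf-obj). -/
def phiTy : LTy → STy
  | .const _ => .lfObj
  | .app _ _ => .lfObj
  | .pi A B => .arr (phiTy A) (phiTy B)

/- The flattening map φ on LF kinds. -/
def phiKind : LKind → STy
  | .type => .lfType
  | .pi A K => .arr (phiTy A) (phiKind K)

/- Simply typed λ-terms (hohh terms), with meta-variables. -/
inductive Tm : Type where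
  | const : Nat → Tm
  | var : Nat → Tm
  | mvar : Nat → Tm
  | app : Tm → Tm → Tm
  | lam : STy → Tm → Tm

def liftTm (d : Nat) : Tm → Tm
  | .const c => .const c
  | .var k => if k < d then .var k else .var (k+1)
  | .mvar X => .mvar X
  | .app m n => .app (liftTm d m) (liftTm d n)
  | .lam τ m => .lam τ (liftTm (d+1) m)

def substTm (d : Nat) (s : Tm) : Tm → Tm
  | .const c => .const c
  | .var k => if k = d then s else if d < k then .var (k-1) else .var k
  | .mvar X => .mvar X
  | .app m n => .app (substTm d s m) (substTm d s n)
  | .lam τ m => .lam τ (substTm (d+1) (liftTm 0 s) m)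

/- The lossy encoding ⟨·⟩ of LF objects as simply typed terms. -/
def enc : LObj → Tm
  | .const c => .const c
  | .var k => .var k
  | .mvar X => .mvar X
  | .app M N => .app (enc M) (enc N)
  | .lam A M => .lam (phiTy A) (enc M)

/- STLC typing, relative to a signature cs and meta-variable typing ms. -/
inductive SHas (cs : Nat → STy) (ms : Nat → STy) : List STy → Tm → STy → Prop where
  | const : SHas cs ms Γ (.const c) (cs c)
  | var : Γ[k]? = some τ → SHas cs ms Γ (.var k) τ
  | mvar : SHas cs ms Γ (.mvar X) (ms X)
  | app : SHas cs ms Γ m (.arr τ σ) → SHas cs ms Γ n τ → SHas cs ms Γ (.app m n) σ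
  | lam : SHas cs ms (τ :: Γ) m σ → SHas cs ms Γ (.lam τ m) (.arr τ σ)

/- The inverse translation (Figure 5): mutually recursive synthesis (⇒) and
   checking (⇐) judgments, relative to object-constant types os, meta-variable
   types Δ, and a context Γ of variable types. -/
mutual
inductive Syn (os Δ : Nat → LTy) : List LTy → Tm → LTy → LObj → Prop where
  | mvar : Syn os Δ Γ (.mvar X) (Δ X) (.mvar X)
  | const : Syn os Δ Γ (.const c) (os c) (.const c)
  | var : Lk Γ k A → Syn os Δ Γ (.var k) A (.var k)
  | app : Syn os Δ Γ t (.pi B A) M₁ → Chk os Δ Γ u B M₂ →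
      Syn os Δ Γ (.app t u) (substTy 0 M₂ A) (.app M₁ M₂)
inductive Chk (os Δ : Nat → LTy) : List LTy → Tm → LTy → LObj → Prop where
  | abs : Chk os Δ (A :: Γ) t B M →
      Chk os Δ Γ (.lam (phiTy A) t) (.pi A B) (.lam A M)
  | syn : Syn os Δ Γ t A M → Chk os Δ Γ t A M
end

/-! The inverse translation is syntax-directed: no synthesis rule applies to a λ-abstraction, so
inv-abs and inv-syn never overlap, and every other rule is fixed by the head of the term. Since the
types read off from `os`, `Δ` and the context are unique, determinism follows by simultaneous
induction on the first derivation. -/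

theorem Lk.unique {Γ : List LTy} {k : Nat} {A A' : LTy} (h : Lk Γ k A) (h' : Lk Γ k A') :
    A = A' := by
  induction h generalizing A' with
  | zero => cases h'; rfl
  | succ _ ih => cases h' with
    | succ h'' => rw [ih h'']

theorem Syn.not_lam {os Δ : Nat → LTy} {Γ : List LTy} {τ : STy} {t : Tm} {A : LTy} {M : LObj} :
    ¬ Syn os Δ Γ (.lam τ t) A M := by
  rintro ⟨⟩

theorem Chk.inv_lam {os Δ : Nat → LTy} {Γ : List LTy} {t t₀ : Tm} {τ : STy} {A A₀ B₀ : LTy}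
    {M : LObj} (h : Chk os Δ Γ t A M) (ht : t = .lam τ t₀) (hA : A = .pi A₀ B₀) :
    ∃ M₀, Chk os Δ (A₀ :: Γ) t₀ B₀ M₀ ∧ M = .lam A₀ M₀ := by
  cases h with
  | abs hbody =>
    obtain ⟨-, rfl⟩ := Tm.lam.inj ht
    obtain ⟨rfl, rfl⟩ := LTy.pi.inj hA
    exact ⟨_, hbody, rfl⟩
  | syn hsyn => exact absurd (ht ▸ hsyn) Syn.not_lam

mutual
theorem Chk.unique {os Δ : Nat → LTy} {Γ : List LTy} {t : Tm} {A : LTy} {M M' : LObj}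
    (h : Chk os Δ Γ t A M) (h' : Chk os Δ Γ t A M') : M = M' :=
  match h with
  | .abs hbody => by
    obtain ⟨M₀', hbody', rfl⟩ := h'.inv_lam rfl rfl
    rw [hbody.unique hbody']
  | .syn hsyn => by
    cases h' with
    | abs _ => exact absurd hsyn Syn.not_lam
    | syn hsyn' => exact (hsyn.unique hsyn').2

theorem Syn.unique {os Δ : Nat → LTy} {Γ : List LTy} {t : Tm} {A A' : LTy} {M M' : LObj}
    (h : Syn os Δ Γ t A M) (h' : Syn os Δ Γ t A' M') : A = A' ∧ M = M' :=
  match h with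
  | .mvar => by cases h'; exact ⟨rfl, rfl⟩
  | .const => by cases h'; exact ⟨rfl, rfl⟩
  | .var hk => by
    cases h' with
    | var hk' => exact ⟨hk.unique hk', rfl⟩
  | .app hfun harg => by
    cases h' with
    | app hfun' harg' =>
      obtain ⟨hpi, rfl⟩ := hfun.unique hfun'
      obtain ⟨rfl, rfl⟩ := LTy.pi.inj hpi
      obtain rfl := harg.unique harg'
      exact ⟨rfl, rfl⟩
end

/-- Determinism of the inverse translation (the typing information os, Δ, Γ
    assigns a unique type to each constant, variable and meta-variable, being
    given by functions/deterministic lookup): checking produces a unique object,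
    and synthesis produces a unique type and object. -/
theorem inverse_translation_deterministic (os Δ : Nat → LTy) :
    (∀ (Γ : List LTy) (t : Tm) (A : LTy) (M M' : LObj),
       Chk os Δ Γ t A M → Chk os Δ Γ t A M' → M = M') ∧
    (∀ (Γ : List LTy) (t : Tm) (A A' : LTy) (M M' : LObj),
       Syn os Δ Γ t A M → Syn os Δ Γ t A' M' → A = A' ∧ M = M') :=
  ⟨fun _ _ _ _ _ => Chk.unique, fun _ _ _ _ _ _ => Syn.unique⟩
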